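/- arXiv:2401.00724 — 7 statements merged into one kernel-verified Lean document; each statement's English description precedes it below -/
import Mathlib

section
/- Let F be a field and A an m×n matrix over F. If the homogeneous linear system Ax = 0 has only the trivial solution x = 0, then there exists an injective function φ : Fin n → Fin m such that A_{φ(j), j} ≠ 0 for every j. -/
theorem stmt_0 {F : Type*} [Field F] {m n : ℕ} (A : Matrix (Fin m) (Fin n) F)
    (h : ∀ x : Fin n → F, A.mulVec x = 0 → x = 0) :
    ∃ φ : Fin n → Fin m, Function.Injective φ ∧ ∀ j, A (φ j) j ≠ 0 := by
  classical
  set t : Fin n → Finset (Fin m) := fun j => Finset.univ.filter (fun i => A i j ≠ 0) with ht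
  have hall : ∀ S : Finset (Fin n), S.card ≤ (S.biUnion t).card := by
    intro S
    set T := S.biUnion t with hT
    have hw : LinearIndependent F (fun (j : S) (i : T) => A i j) := by
      rw [Fintype.linearIndependent_iff]
      intro g hg
      set g' : Fin n → F := fun j => if hj : j ∈ S then g ⟨j, hj⟩ else 0 with hg'
      have hsum : ∀ i : Fin m, A.mulVec g' i = ∑ j : S, A i j * g j := by
        intro i
        rw [Matrix.mulVec, dotProduct]
        rw [← Finset.sum_subset (Finset.subset_univ S)
          (fun j _ hj => by simp [hg', hj])]
        rw [← Finset.sum_attach S (fun j => A i j * g' j)]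
        exact Finset.sum_congr rfl (fun j _ => by simp [hg', j.2])
      have hmul : A.mulVec g' = 0 := by
        funext i
        rw [hsum i]
        by_cases hi : i ∈ T
        · have := congrFun hg ⟨i, hi⟩
          simpa [mul_comm] using this
        · have : ∀ j : S, A i j = 0 := by
            intro j
            by_contra hne
            exact hi (Finset.mem_biUnion.2 ⟨j, j.2, by simp [ht, hne]⟩)
          simp [this]
      have hz := h g' hmul
      intro j
      have := congrFun hz j
      simpa [hg', j.2] using this
    have := hw.fintype_card_le_finrank
    simpa using this
  obtain ⟨φ, hinj, hφ⟩ := (Finset.all_card_le_biUnion_card_iff_exists_injective t).mp hall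
  refine ⟨φ, hinj, fun j => ?_⟩
  have := hφ j
  simpa [ht] using this
end

section
/- Let F be a field, I and J (possibly infinite) index sets, and a : I × J → F a function such that for each fixed i ∈ I there are only finitely many j ∈ J with a(i,j) ≠ 0. Suppose that whenever x : J → F satisfies ∑_{j ∈ J} a(i,j)·x(j) = 0 for every i ∈ I (each sum being finite), then x is identically zero. Then there exists an injection φ : J → I such that a(φ(j), j) ≠ 0 for every j ∈ J. -/
/-!
The rows `r i` span `J →₀ F`: a nonzero functional `f` vanishing on all rows would give the
nontrivial solution `x j := f (single j 1)`.

If the rows indexed by `R`, restricted to countably many columns `C`, span `C →₀ F`, then (Steinitz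
exchange) for any `j ∈ C` some row `i` with `r i j ≠ 0` can be removed together with `j` so that
the rest still spans. Matching the columns of `C` one at a time, the Rasiowa–Sikorski lemma glues
these finite stages into a matching of all of `C`.

In general, Zorn gives a maximal matching `σ` whose rows are supported in the set `D` of its
columns. Every column lies in a countable set `K` of columns each of whose unit vectors is a
combination of rows supported in `K`. Rows supported in `D` vanish on `K \ D`, so the remaining
rows supported in `D ∪ K` span the system on `K \ D`, and the countable case matches `K \ D` with
rows unused by `σ`. By maximality `K ⊆ D`.
-/

open Finsupp Submodule Set Function

section

variable {F : Type*} [Field F] {I J : Type*} {r : I → J →₀ F} {R : Set I} {C : Set J}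

theorem Set.InjOn.sUnion_of_directedOn {α β : Type*} {c : Set (Set α)} {f : α → β}
    (hc : DirectedOn (· ⊆ ·) c) (h : ∀ s ∈ c, InjOn f s) : InjOn f (⋃₀ c) := by
  rintro x ⟨s, hs, hx⟩ y ⟨t, ht, hy⟩
  obtain ⟨u, hu, hsu, htu⟩ := hc s hs t ht
  exact h u hu (hsu hx) (htu hy)

theorem exists_countable_mem_forall_subset {α : Type*} (g : α → Set α)
    (hg : ∀ a, (g a).Countable) (a : α) :
    ∃ K : Set α, a ∈ K ∧ K.Countable ∧ ∀ b ∈ K, g b ⊆ K := by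
  let step : Set α → Set α := fun s => ⋃ b ∈ s, g b
  refine ⟨⋃ n, step^[n] {a}, mem_iUnion.2 ⟨0, rfl⟩, countable_iUnion fun n => ?_, ?_⟩
  · induction n with
    | zero => exact countable_singleton a
    | succ n ih => exact iterate_succ_apply' step n _ ▸ ih.biUnion fun b _ => hg b
  · intro b hb
    obtain ⟨n, hbn⟩ := mem_iUnion.1 hb
    have hnext : step (step^[n] {a}) ⊆ ⋃ n, step^[n] {a} :=
      iterate_succ_apply' step n _ ▸ subset_iUnion (fun n => step^[n] {a}) (n + 1)
    exact (subset_biUnion_of_mem hbn).trans hnext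

theorem span_range_eq_top_of_forall_finsum_eq_zero
    (h : ∀ x : J → F, (∀ i, ∑ᶠ j, r i j * x j = 0) → x = 0) : span F (range r) = ⊤ := by
  by_contra hne
  obtain ⟨f, hf, hle⟩ := exists_le_ker_of_lt_top _ (lt_top_iff_ne_top.2 hne)
  have hx : (fun j => f (single j 1)) = 0 := h _ fun i => by
    rw [finsum_eq_sum_of_support_subset (s := (r i).support) _
      fun j hj => mem_support_iff.2 (left_ne_zero_of_mul (Function.mem_support.1 hj))]
    refine Eq.trans ?_ (LinearMap.mem_ker.1 (hle (subset_span (mem_range_self i))))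
    conv_rhs => rw [← (r i).sum_single]
    rw [Finsupp.sum, map_sum]
    exact Finset.sum_congr rfl fun j _ => by rw [← smul_eq_mul, ← map_smul, smul_single_one]
  refine hf (Finsupp.lhom_ext fun j c => ?_)
  rw [← smul_single_one, map_smul, congr_fun hx j, Pi.zero_apply, smul_zero, LinearMap.zero_apply]

/-- Via `(J →₀ F) ⧸ supported F F Cᶜ ≃ (C →₀ F)`: the rows indexed by `R`, restricted to the
columns in `C`, span `C →₀ F`. -/
def SpansOn (r : I → J →₀ F) (R : Set I) (C : Set J) : Prop :=
  ∀ j ∈ C, single j 1 ∈ span F (r '' R) ⊔ supported F F Cᶜ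

theorem SpansOn.exists_exchange (h : SpansOn r R C) {j : J} (hj : j ∈ C) :
    ∃ i ∈ R, r i j ≠ 0 ∧ SpansOn r (R \ {i}) (C \ {j}) := by
  classical
  obtain ⟨y, hy, z, hz, hyz⟩ := mem_sup.1 (h j hj)
  obtain ⟨l, hlR, rfl⟩ := (mem_span_image_iff_linearCombination F).1 hy
  have hzj : z j = 0 := notMem_support_iff.1 fun hjz => (mem_supported F z).1 hz hjz hj
  have hsum : ∑ i ∈ l.support, l i * r i j = 1 := by
    simpa [hzj, linearCombination_apply, Finsupp.sum] using congr($hyz j)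
  obtain ⟨i, hil, hi⟩ := Finset.exists_ne_zero_of_sum_ne_zero (hsum ▸ one_ne_zero)
  refine ⟨i, hlR hil, right_ne_zero_of_mul hi, ?_⟩
  set M := span F (r '' (R \ {i})) ⊔ supported F F (C \ {j})ᶜ
  have hsupp : supported F F Cᶜ ≤ M :=
    le_sup_of_le_right (supported_mono (compl_subset_compl.2 sdiff_subset))
  have hrest : linearCombination F r (l.erase i) ∈ M := by
    refine mem_sup_left ((mem_span_image_iff_linearCombination F).2 ⟨_, ?_, rfl⟩)
    exact (mem_supported F _).2 fun i' hi' => by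
      rw [Finset.mem_coe, support_erase, Finset.mem_erase] at hi'
      exact ⟨hlR hi'.2, hi'.1⟩
  have hri : r i ∈ M := by
    have hdecomp : l i • r i = single j 1 - z - linearCombination F r (l.erase i) := by
      have hl : linearCombination F r l = l i • r i + linearCombination F r (l.erase i) := by
        conv_lhs => rw [← single_add_erase i l]
        rw [map_add, linearCombination_single]
      rw [← hyz, hl]
      abel
    have hsingle : single j (1 : F) ∈ M :=
      mem_sup_right (single_mem_supported F _ fun hj' => hj'.2 rfl)
    rw [← inv_smul_smul₀ (left_ne_zero_of_mul hi) (r i), hdecomp]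
    exact smul_mem _ _ (sub_mem (sub_mem hsingle (hsupp hz)) hrest)
  have hspan : span F (r '' R) ≤ M := span_le.2 <| by
    rintro _ ⟨i', hi', rfl⟩
    by_cases hii' : i' = i
    · exact hii' ▸ hri
    · exact mem_sup_left (subset_span ⟨i', ⟨hi', hii'⟩, rfl⟩)
  exact fun j' hj' => sup_le hspan hsupp (h j' hj'.1)

structure IsMatching (r : I → J →₀ F) (σ : Set (I × J)) : Prop where
  ne_zero : ∀ p ∈ σ, r p.1 p.2 ≠ 0
  injOn_fst : InjOn Prod.fst σ
  injOn_snd : InjOn Prod.snd σ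

theorem isMatching_singleton {i : I} {j : J} (h : r i j ≠ 0) : IsMatching r {(i, j)} :=
  ⟨by simpa using h, injOn_singleton _ _, injOn_singleton _ _⟩

theorem IsMatching.union {σ τ : Set (I × J)} (hσ : IsMatching r σ) (hτ : IsMatching r τ)
    (hfst : Disjoint (Prod.fst '' σ) (Prod.fst '' τ))
    (hsnd : Disjoint (Prod.snd '' σ) (Prod.snd '' τ)) : IsMatching r (σ ∪ τ) where
  ne_zero p hp := hp.elim (hσ.ne_zero p) (hτ.ne_zero p)
  injOn_fst := (injOn_union hfst.of_image).2 ⟨hσ.injOn_fst, hτ.injOn_fst,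
    fun _ hp _ hq => hfst.ne_of_mem (mem_image_of_mem _ hp) (mem_image_of_mem _ hq)⟩
  injOn_snd := (injOn_union hsnd.of_image).2 ⟨hσ.injOn_snd, hτ.injOn_snd,
    fun _ hp _ hq => hsnd.ne_of_mem (mem_image_of_mem _ hp) (mem_image_of_mem _ hq)⟩

theorem isMatching_sUnion {c : Set (Set (I × J))} (hc : DirectedOn (· ⊆ ·) c)
    (h : ∀ σ ∈ c, IsMatching r σ) : IsMatching r (⋃₀ c) where
  ne_zero := fun _ ⟨σ, hσ, hp⟩ => (h σ hσ).ne_zero _ hp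
  injOn_fst := .sUnion_of_directedOn hc fun σ hσ => (h σ hσ).injOn_fst
  injOn_snd := .sUnion_of_directedOn hc fun σ hσ => (h σ hσ).injOn_snd

theorem IsMatching.exists_injective {σ : Set (I × J)} (hσ : IsMatching r σ)
    (hcover : ∀ j, j ∈ Prod.snd '' σ) : ∃ φ : J → I, Injective φ ∧ ∀ j, r (φ j) j ≠ 0 := by
  choose p hpσ hpj using hcover
  refine ⟨fun j => (p j).1, fun j j' hjj' => ?_, fun j => ?_⟩
  · rw [← hpj j, ← hpj j', hσ.injOn_fst (hpσ j) (hpσ j') hjj']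
  · simpa only [hpj] using hσ.ne_zero _ (hpσ j)

structure IsExchangeStage (r : I → J →₀ F) (R : Set I) (C : Set J) (τ : Set (I × J)) : Prop where
  isMatching : IsMatching r τ
  subset : τ ⊆ R ×ˢ C
  spansOn : SpansOn r (R \ Prod.fst '' τ) (C \ Prod.snd '' τ)

theorem IsExchangeStage.exists_extend {τ : Set (I × J)} (hτ : IsExchangeStage r R C τ) {j : J}
    (hj : j ∈ C) : ∃ τ', IsExchangeStage r R C τ' ∧ τ ⊆ τ' ∧ j ∈ Prod.snd '' τ' := by
  by_cases hjτ : j ∈ Prod.snd '' τ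
  · exact ⟨τ, hτ, subset_rfl, hjτ⟩
  obtain ⟨i, ⟨hiR, hiτ⟩, hij, hspans⟩ := hτ.spansOn.exists_exchange ⟨hj, hjτ⟩
  refine ⟨insert (i, j) τ, ⟨?_, insert_subset ⟨hiR, hj⟩ hτ.subset, ?_⟩, subset_insert _ _,
    ⟨(i, j), mem_insert _ _, rfl⟩⟩
  · rw [insert_eq]
    exact (isMatching_singleton hij).union hτ.isMatching (by simpa using hiτ) (by simpa using hjτ)
  · simpa only [image_insert_eq, sdiff_sdiff, union_singleton] using hspans

theorem SpansOn.exists_isMatching_of_countable (h : SpansOn r R C) (hC : C.Countable) :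
    ∃ τ, IsMatching r τ ∧ τ ⊆ R ×ˢ C ∧ C ⊆ Prod.snd '' τ := by
  have := hC.to_subtype
  let _ := Encodable.ofCountable C
  let P := {τ : Set (I × J) // IsExchangeStage r R C τ}
  have hstart : IsExchangeStage r R C ∅ :=
    ⟨⟨by simp, by simp, by simp⟩, empty_subset _, by simpa using h⟩
  let start : P := ⟨∅, hstart⟩
  let covering (j : C) : Order.Cofinal P :=
    ⟨{τ | j.1 ∈ Prod.snd '' τ.1}, fun τ => by
      obtain ⟨τ', hτ', hle, hj⟩ := τ.2.exists_extend j.2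
      exact ⟨⟨τ', hτ'⟩, hj, hle⟩⟩
  let ideal := Order.idealOfCofinals start covering
  have hdir : DirectedOn (· ⊆ ·) (Subtype.val '' (ideal : Set P)) :=
    directedOn_image.2 ideal.directed
  refine ⟨⋃₀ (Subtype.val '' (ideal : Set P)), isMatching_sUnion hdir ?_, ?_, fun j hj => ?_⟩
  · rintro _ ⟨τ, -, rfl⟩
    exact τ.2.isMatching
  · exact sUnion_subset (by rintro _ ⟨τ, -, rfl⟩; exact τ.2.subset)
  · obtain ⟨τ, hjτ, hτ⟩ := Order.cofinal_meets_idealOfCofinals start covering ⟨j, hj⟩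
    exact image_mono (subset_sUnion_of_mem (mem_image_of_mem _ hτ)) hjτ

def rowsIn (r : I → J →₀ F) (S : Set J) : Set I := {i | ↑(r i).support ⊆ S}

theorem rowsIn_mono {S T : Set J} (h : S ⊆ T) : rowsIn r S ⊆ rowsIn r T :=
  fun _ hi => hi.trans h

structure IsClosedMatching (r : I → J →₀ F) (σ : Set (I × J)) : Prop extends IsMatching r σ where
  fst_subset : Prod.fst '' σ ⊆ rowsIn r (Prod.snd '' σ)

theorem isClosedMatching_sUnion {c : Set (Set (I × J))} (hc : DirectedOn (· ⊆ ·) c)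
    (h : ∀ σ ∈ c, IsClosedMatching r σ) : IsClosedMatching r (⋃₀ c) where
  toIsMatching := isMatching_sUnion hc fun σ hσ => (h σ hσ).toIsMatching
  fst_subset := by
    rintro _ ⟨p, ⟨σ, hσ, hp⟩, rfl⟩
    exact rowsIn_mono (image_mono (subset_sUnion_of_mem hσ))
      ((h σ hσ).fst_subset (mem_image_of_mem _ hp))

theorem IsClosedMatching.exists_extend {σ : Set (I × J)} (hσ : IsClosedMatching r σ)
    {K : Set J} (hK : K.Countable) (hspan : ∀ j ∈ K, single j 1 ∈ span F (r '' rowsIn r K)) :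
    ∃ σ', IsClosedMatching r σ' ∧ σ ⊆ σ' ∧ K ⊆ Prod.snd '' σ' := by
  set D := Prod.snd '' σ
  have hspans : SpansOn r (rowsIn r (D ∪ K) \ rowsIn r D) (K \ D) := by
    refine fun j hj => span_le.2 ?_ (hspan j hj.1)
    rintro _ ⟨i, hi, rfl⟩
    by_cases hiD : i ∈ rowsIn r D
    · exact mem_sup_right ((mem_supported F _).2 fun _ hj' hj'KD => hj'KD.2 (hiD hj'))
    · exact mem_sup_left (subset_span ⟨i, ⟨rowsIn_mono subset_union_right hi, hiD⟩, rfl⟩)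
  obtain ⟨τ, hτ, hτsub, hcover⟩ := hspans.exists_isMatching_of_countable (hK.mono sdiff_subset)
  have hτsnd : Prod.snd '' τ = K \ D :=
    (image_subset_iff.2 fun p hp => (hτsub hp).2).antisymm hcover
  have hsnd : Prod.snd '' (σ ∪ τ) = D ∪ K := by rw [image_union, hτsnd, union_sdiff_self]
  refine ⟨σ ∪ τ, ⟨hσ.union hτ ?_ (hτsnd ▸ disjoint_sdiff_right), ?_⟩, subset_union_left,
    hsnd ▸ subset_union_right⟩
  · refine disjoint_of_subset_left hσ.fst_subset (disjoint_right.2 ?_)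
    rintro _ ⟨p, hp, rfl⟩
    exact (hτsub hp).1.2
  · rw [image_union, hsnd]
    refine union_subset (hσ.fst_subset.trans (rowsIn_mono subset_union_left)) ?_
    rintro _ ⟨p, hp, rfl⟩
    exact (hτsub hp).1.1

theorem exists_countable_mem_forall_single_mem_span (hspan : span F (range r) = ⊤) (j : J) :
    ∃ K, j ∈ K ∧ K.Countable ∧ ∀ k ∈ K, single k 1 ∈ span F (r '' rowsIn r K) := by
  choose c hc using fun k : J =>
    (mem_span_range_iff_exists_finsupp (R := F)).1 (hspan ▸ mem_top (x := single k (1 : F)))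
  obtain ⟨K, hjK, hKc, hclosed⟩ := exists_countable_mem_forall_subset
    (fun k => ⋃ i ∈ (c k).support, ((r i).support : Set J))
    (fun k => ((c k).support.finite_toSet.biUnion fun i _ => (r i).support.finite_toSet).countable)
    j
  refine ⟨K, hjK, hKc, fun k hk => ?_⟩
  rw [← hc k]
  exact (mem_span_image_iff_linearCombination F).2 ⟨c k, (mem_supported F _).2 fun i hi =>
    (subset_biUnion_of_mem (u := fun i => ((r i).support : Set J)) hi).trans (hclosed k hk),
    linearCombination_apply F _⟩

theorem exists_isMatching_of_span_eq_top (hspan : span F (range r) = ⊤) :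
    ∃ σ, IsMatching r σ ∧ ∀ j, j ∈ Prod.snd '' σ := by
  obtain ⟨σ, hσ⟩ := zorn_subset {σ | IsClosedMatching r σ} fun c hc hchain =>
    ⟨⋃₀ c, isClosedMatching_sUnion hchain.directedOn hc, fun _ => subset_sUnion_of_mem⟩
  refine ⟨σ, hσ.prop.toIsMatching, fun j => ?_⟩
  obtain ⟨K, hjK, hKc, hKspan⟩ := exists_countable_mem_forall_single_mem_span hspan j
  obtain ⟨σ', hσ', hle, hKσ'⟩ := hσ.prop.exists_extend hKc hKspan
  exact hσ.eq_of_subset hσ' hle ▸ hKσ' hjK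

end

theorem stmt_2 {F : Type*} [Field F] {I J : Type*} (a : I × J → F)
    (hrow : ∀ i : I, {j : J | a (i, j) ≠ 0}.Finite)
    (htriv : ∀ x : J → F, (∀ i : I, ∑ᶠ j : J, a (i, j) * x j = 0) → x = 0) :
    ∃ φ : J → I, Function.Injective φ ∧ ∀ j : J, a (φ j, j) ≠ 0 := by
  let r : I → J →₀ F := fun i => ofSupportFinite (fun j => a (i, j)) (hrow i)
  obtain ⟨σ, hσ, hcover⟩ :=
    exists_isMatching_of_span_eq_top (span_range_eq_top_of_forall_finsum_eq_zero (r := r) htriv)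
  exact hσ.exists_injective hcover
end

section
/- If M is a finitary matroid (every circuit of M is finite) and B₀, B₁ are bases of M, then there is a bijection f : B₀ → B₁ such that (B₀ \ {x}) ∪ {f(x)} is a base of M for each x ∈ B₀. -/
/-!
Encode a partial bijection `B₀ ⇀ B₁` as a set of pairs `(x, y)` with `B₀ - x + y` a base, containing
the identity on `B₀ ∩ B₁`, such that swapping the matched part of `B₁` for the matched part of `B₀`
still gives a base. Brualdi's symmetric exchange extends such a matching by any unmatched `x ∈ B₀`.

Unions of chains of matchings need not be matchings, but they are when, in the union, the matched
part of `B₁` is spanned by the matched part of `B₀`: finitarity makes the swapped set independent,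
and the spanning condition makes it a base. Zorn's lemma applies to matchings with this property.
To absorb an unmatched `x` into one, match `x`, then match a finite subset of `B₀` spanning the
newly matched elements of `B₁`, and repeat `ω` times. A maximal matching therefore covers `B₀`, and
then also `B₁`, since its swapped set is a base containing `B₀`.
-/

open Set Function

theorem Set.exists_bijective_of_injOn_fst_snd {α β : Type*} {r : Set (α × β)} {s : Set α}
    {t : Set β} (h₁ : InjOn Prod.fst r) (h₂ : InjOn Prod.snd r) (hs : Prod.fst '' r = s)
    (ht : Prod.snd '' r = t) : ∃ f : s → t, Bijective f ∧ ∀ x : s, ((x : α), (f x : β)) ∈ r := by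
  subst hs ht
  refine ⟨(h₁.bijOn_image.equiv _).symm.trans (h₂.bijOn_image.equiv _), Equiv.bijective _,
    fun x ↦ ?_⟩
  nth_rewrite 1 [← (h₁.bijOn_image.equiv _).apply_symm_apply x]
  exact ((h₁.bijOn_image.equiv _).symm x).2

namespace Matroid

variable {α : Type*} {M : Matroid α} {B B₀ B₁ F P : Set α} {s m : Set (α × α)} {x : α}

lemma IsBase.exists_symm_exchange (hB₀ : M.IsBase B₀) (hB : M.IsBase B) (hx : x ∈ B₀ \ B) :
    ∃ y ∈ B \ B₀, M.IsBase (insert y (B₀ \ {x})) ∧ M.IsBase (insert x (B \ {y})) := by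
  have hxcl : x ∈ M.closure B := by rw [hB.closure_eq]; exact hB₀.subset_ground hx.1
  have hC := hB.indep.fundCircuit_isCircuit hxcl hx.2
  obtain ⟨y, ⟨hyC, hyx⟩, hy⟩ : ∃ y ∈ M.fundCircuit x B \ {x}, y ∉ M.closure (B₀ \ {x}) := by
    by_contra! h
    exact hB₀.indep.notMem_closure_sdiff_of_mem hx.1 <| M.closure_subset_closure_of_subset_closure
      h (hC.mem_closure_sdiff_singleton_of_mem (M.mem_fundCircuit x B))
  have hyB : y ∈ B := (M.fundCircuit_subset_insert x B hyC).resolve_left hyx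
  have hyB₀ : y ∉ B₀ := fun h ↦
    hy (M.subset_closure _ (sdiff_subset.trans hB₀.subset_ground) ⟨h, hyx⟩)
  refine ⟨y, ⟨hyB, hyB₀⟩, hB₀.exchange_base_of_notMem_closure hx.1 hy (hB.subset_ground hyB),
    hB.exchange_isBase_of_indep hx.2 ?_⟩
  rw [insert_sdiff_singleton_comm (Ne.symm hyx)]
  exact (hB.indep.mem_fundCircuit_iff hxcl hx.2).1 hyC

structure IsExchangeMatching (M : Matroid α) (B₀ B₁ : Set α) (s : Set (α × α)) : Prop where
  subset_prod : s ⊆ B₀ ×ˢ B₁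
  diag_mem : ∀ z ∈ B₀ ∩ B₁, (z, z) ∈ s
  injOn_fst : InjOn Prod.fst s
  injOn_snd : InjOn Prod.snd s
  isBase_exchange : ∀ p ∈ s, M.IsBase (insert p.2 (B₀ \ {p.1}))
  isBase_swap : M.IsBase (B₁ \ Prod.snd '' s ∪ Prod.fst '' s)

lemma isExchangeMatching_diag (hB₀ : M.IsBase B₀) (hB₁ : M.IsBase B₁) :
    M.IsExchangeMatching B₀ B₁ ((fun z ↦ (z, z)) '' (B₀ ∩ B₁)) where
  subset_prod := by
    rintro _ ⟨z, hz, rfl⟩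
    exact ⟨hz.1, hz.2⟩
  diag_mem z hz := mem_image_of_mem _ hz
  injOn_fst := by
    rintro _ ⟨a, -, rfl⟩ _ ⟨b, -, rfl⟩ (rfl : a = b)
    rfl
  injOn_snd := by
    rintro _ ⟨a, -, rfl⟩ _ ⟨b, -, rfl⟩ (rfl : a = b)
    rfl
  isBase_exchange := by
    rintro _ ⟨z, hz, rfl⟩
    rwa [insert_sdiff_singleton, insert_eq_of_mem hz.1]
  isBase_swap := by
    rwa [image_image, image_image, image_id', sdiff_union_of_subset inter_subset_right]

namespace IsExchangeMatching

lemma fst_subset (hs : M.IsExchangeMatching B₀ B₁ s) : Prod.fst '' s ⊆ B₀ :=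
  (image_mono hs.subset_prod).trans (fst_image_prod_subset _ _)

lemma snd_subset (hs : M.IsExchangeMatching B₀ B₁ s) : Prod.snd '' s ⊆ B₁ :=
  (image_mono hs.subset_prod).trans (snd_image_prod_subset _ _)

lemma exists_insert (hs : M.IsExchangeMatching B₀ B₁ s) (hB₀ : M.IsBase B₀) (hx : x ∈ B₀)
    (hxs : x ∉ Prod.fst '' s) : ∃ y, M.IsExchangeMatching B₀ B₁ (insert (x, y) s) := by
  have hxB₁ : x ∉ B₁ := fun h ↦ hxs ⟨(x, x), hs.diag_mem x ⟨hx, h⟩, rfl⟩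
  have hxT : x ∉ B₁ \ Prod.snd '' s ∪ Prod.fst '' s := by
    rintro (h | h)
    exacts [hxB₁ h.1, hxs h]
  obtain ⟨y, ⟨hyT, hyB₀⟩, hyx, hxy⟩ := hB₀.exists_symm_exchange hs.isBase_swap ⟨hx, hxT⟩
  have hyfst : y ∉ Prod.fst '' s := fun h ↦ hyB₀ (hs.fst_subset h)
  have hy : y ∈ B₁ \ Prod.snd '' s := hyT.resolve_right hyfst
  have hxys : (x, y) ∉ s := fun h ↦ hxs ⟨_, h, rfl⟩
  refine ⟨y, insert_subset ⟨hx, hy.1⟩ hs.subset_prod,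
    fun z hz ↦ mem_insert_of_mem _ (hs.diag_mem z hz), (injOn_insert hxys).2 ⟨hs.injOn_fst, hxs⟩,
    (injOn_insert hxys).2 ⟨hs.injOn_snd, hy.2⟩, ?_, ?_⟩
  · rintro p (rfl | hp)
    exacts [hyx, hs.isBase_exchange p hp]
  · convert hxy using 1
    ext a
    simp only [image_insert_eq, mem_union, mem_sdiff, mem_insert_iff, mem_singleton_iff]
    grind

lemma exists_superset_subset_image_fst (hs : M.IsExchangeMatching B₀ B₁ s) (hB₀ : M.IsBase B₀)
    (hPB₀ : P ⊆ B₀) (hP : P.Finite) :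
    ∃ s', M.IsExchangeMatching B₀ B₁ s' ∧ s ⊆ s' ∧ (s' \ s).Finite ∧ P ⊆ Prod.fst '' s' := by
  induction P, hP using Set.Finite.induction_on with
  | empty => exact ⟨s, hs, Subset.rfl, by simp, empty_subset _⟩
  | @insert a P _ _ ih =>
    obtain ⟨s', hs', hss', hfin, hP⟩ := ih ((subset_insert a P).trans hPB₀)
    by_cases ha : a ∈ Prod.fst '' s'
    · exact ⟨s', hs', hss', hfin, insert_subset ha hP⟩
    obtain ⟨b, hb⟩ := hs'.exists_insert hB₀ (hPB₀ (mem_insert a P)) ha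
    refine ⟨insert (a, b) s', hb, hss'.trans (subset_insert _ _),
      (hfin.insert (a, b)).subset insert_sdiff_subset, insert_subset ⟨_, mem_insert _ _, rfl⟩
        (hP.trans (image_mono (subset_insert _ _)))⟩

lemma exists_superset_subset_closure [M.Finitary] (hs : M.IsExchangeMatching B₀ B₁ s)
    (hB₀ : M.IsBase B₀) (hF : F.Finite) (hFE : F ⊆ M.E) :
    ∃ s', M.IsExchangeMatching B₀ B₁ s' ∧ s ⊆ s' ∧ (s' \ s).Finite ∧
      F ⊆ M.closure (Prod.fst '' s') := by
  obtain ⟨P, hPB₀, hP, -, hFP⟩ :=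
    M.exists_subset_finite_closure_of_subset_closure hF (hB₀.closure_eq ▸ hFE)
  obtain ⟨s', hs', hss', hfin, hPs'⟩ := hs.exists_superset_subset_image_fst hB₀ hPB₀ hP
  exact ⟨s', hs', hss', hfin, hFP.trans (M.closure_mono hPs')⟩

end IsExchangeMatching

lemma isExchangeMatching_iUnion [M.Finitary] {ι : Type*} [Nonempty ι] {u : ι → Set (α × α)}
    (hB₁ : M.IsBase B₁) (hu : Directed (· ⊆ ·) u) (h : ∀ i, M.IsExchangeMatching B₀ B₁ (u i))
    (hspan : Prod.snd '' ⋃ i, u i ⊆ M.closure (Prod.fst '' ⋃ i, u i)) :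
    M.IsExchangeMatching B₀ B₁ (⋃ i, u i) := by
  set U := ⋃ i, u i
  have hindep : M.Indep (B₁ \ Prod.snd '' U ∪ Prod.fst '' U) := by
    refine indep_of_forall_finite_subset_indep _ fun F hFT hF ↦ ?_
    have hdir : Directed (· ⊆ ·) (image Prod.fst ∘ u) := hu.mono_comp _ fun _ _ ↦ image_mono
    obtain ⟨i, hi⟩ := hdir.exists_mem_subset_of_finset_subset_biUnion
      (s := (hF.inter_of_left (Prod.fst '' U)).toFinset) (by simp [U, image_iUnion])
    refine (h i).isBase_swap.indep.subset fun a ha ↦ ?_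
    by_cases haU : a ∈ Prod.fst '' U
    · exact Or.inr (hi (by simpa only [Finite.coe_toFinset] using ⟨ha, haU⟩))
    · obtain ⟨haB₁, haU'⟩ := (hFT ha).resolve_right haU
      exact Or.inl ⟨haB₁, fun h' ↦ haU' (image_mono (subset_iUnion u i) h')⟩
  have hB₁T : B₁ ⊆ M.closure (B₁ \ Prod.snd '' U ∪ Prod.fst '' U) := by
    intro a ha
    by_cases haU : a ∈ Prod.snd '' U
    · exact M.closure_mono subset_union_right (hspan haU)
    · exact M.subset_closure _ hindep.subset_ground (Or.inl ⟨ha, haU⟩)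
  obtain ⟨i⟩ := ‹Nonempty ι›
  refine ⟨iUnion_subset fun i ↦ (h i).subset_prod,
    fun z hz ↦ subset_iUnion u i ((h i).diag_mem z hz),
    inj_on_iUnion_of_directed hu fun i ↦ (h i).injOn_fst,
    inj_on_iUnion_of_directed hu fun i ↦ (h i).injOn_snd, fun p hp ↦ ?_,
    hindep.isBase_of_ground_subset_closure ?_⟩
  · obtain ⟨j, hj⟩ := mem_iUnion.1 hp
    exact (h j).isBase_exchange p hj
  · rw [← hB₁.closure_eq]
    exact M.closure_subset_closure_of_subset_closure hB₁T

lemma IsExchangeMatching.exists_ssuperset [M.Finitary] (hm : M.IsExchangeMatching B₀ B₁ m)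
    (hB₀ : M.IsBase B₀) (hB₁ : M.IsBase B₁) (hmspan : Prod.snd '' m ⊆ M.closure (Prod.fst '' m))
    (hx : x ∈ B₀) (hxm : x ∉ Prod.fst '' m) :
    ∃ s, M.IsExchangeMatching B₀ B₁ s ∧ Prod.snd '' s ⊆ M.closure (Prod.fst '' s) ∧ m ⊂ s := by
  have step : ∀ s, M.IsExchangeMatching B₀ B₁ s ∧ m ⊆ s ∧ (s \ m).Finite →
      ∃ s', (M.IsExchangeMatching B₀ B₁ s' ∧ m ⊆ s' ∧ (s' \ m).Finite) ∧ s ⊆ s' ∧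
        Prod.snd '' (s \ m) ⊆ M.closure (Prod.fst '' s') := by
    rintro s ⟨hs, hms, hfin⟩
    have hE : Prod.snd '' (s \ m) ⊆ M.E :=
      (image_mono sdiff_subset).trans (hs.snd_subset.trans hB₁.subset_ground)
    obtain ⟨s', hs', hss', hfin', hcl⟩ :=
      hs.exists_superset_subset_closure hB₀ (hfin.image Prod.snd) hE
    exact ⟨s', ⟨hs', hms.trans hss', (hfin'.union hfin).subset (sdiff_triangle s' s m)⟩, hss',
      hcl⟩
  choose! next hnext using step
  obtain ⟨y, hy⟩ := hm.exists_insert hB₀ hx hxm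
  set u : ℕ → Set (α × α) := fun n ↦ next^[n] (insert (x, y) m)
  have hsucc (n : ℕ) : u (n + 1) = next (u n) := iterate_succ_apply' ..
  have hu : ∀ n, M.IsExchangeMatching B₀ B₁ (u n) ∧ m ⊆ u n ∧ (u n \ m).Finite := by
    intro n
    induction n with
    | zero => exact ⟨hy, subset_insert _ _,
        (finite_singleton (x, y)).subset fun p hp ↦ hp.1.resolve_right hp.2⟩
    | succ n ih => exact hsucc n ▸ (hnext _ ih).1
  have hmono : Monotone u := monotone_nat_of_le_succ fun n ↦ hsucc n ▸ (hnext _ (hu n)).2.1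
  have hmu : m ⊆ ⋃ n, u n := (hu 0).2.1.trans (subset_iUnion u 0)
  have hUspan : Prod.snd '' ⋃ n, u n ⊆ M.closure (Prod.fst '' ⋃ n, u n) := by
    rintro _ ⟨p, hp, rfl⟩
    obtain ⟨n, hn⟩ := mem_iUnion.1 hp
    by_cases hpm : p ∈ m
    · exact M.closure_mono (image_mono hmu) (hmspan (mem_image_of_mem _ hpm))
    · refine M.closure_mono (image_mono (subset_iUnion u (n + 1))) ?_
      exact hsucc n ▸ (hnext _ (hu n)).2.2 (mem_image_of_mem _ ⟨hn, hpm⟩)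
  refine ⟨⋃ n, u n, isExchangeMatching_iUnion hB₁ hmono.directed_le (fun n ↦ (hu n).1) hUspan,
    hUspan, (ssubset_iff_of_subset hmu).2 ⟨(x, y), subset_iUnion u 0 (mem_insert _ _), ?_⟩⟩
  exact fun h ↦ hxm ⟨_, h, rfl⟩

theorem exists_isExchangeMatching_image_eq [M.Finitary] (hB₀ : M.IsBase B₀)
    (hB₁ : M.IsBase B₁) :
    ∃ m, M.IsExchangeMatching B₀ B₁ m ∧ Prod.fst '' m = B₀ ∧ Prod.snd '' m = B₁ := by
  set S := {s | M.IsExchangeMatching B₀ B₁ s ∧ Prod.snd '' s ⊆ M.closure (Prod.fst '' s)}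
  have hdiag : (fun z ↦ (z, z)) '' (B₀ ∩ B₁) ∈ S := by
    refine ⟨isExchangeMatching_diag hB₀ hB₁, ?_⟩
    simp only [image_image, image_id']
    exact M.subset_closure _ (inter_subset_left.trans hB₀.subset_ground)
  have hchain : ∀ c ⊆ S, IsChain (· ⊆ ·) c → c.Nonempty → ∃ ub ∈ S, ∀ s ∈ c, s ⊆ ub := by
    intro c hcS hc hne
    have : Nonempty c := hne.to_subtype
    have hspan : Prod.snd '' ⋃₀ c ⊆ M.closure (Prod.fst '' ⋃₀ c) := by
      rintro _ ⟨p, ⟨t, ht, hp⟩, rfl⟩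
      exact M.closure_mono (image_mono (subset_sUnion_of_mem ht))
        ((hcS ht).2 (mem_image_of_mem _ hp))
    refine ⟨⋃₀ c, ⟨?_, hspan⟩, fun s ↦ subset_sUnion_of_mem⟩
    rw [sUnion_eq_iUnion] at hspan ⊢
    exact isExchangeMatching_iUnion hB₁ hc.directedOn.directed_val (fun t ↦ (hcS t.2).1) hspan
  obtain ⟨m, -, ⟨hm, hmspan⟩, hmax⟩ := zorn_subset_nonempty S hchain _ hdiag
  have hfst : Prod.fst '' m = B₀ := by
    refine hm.fst_subset.antisymm fun x hx ↦ by_contra fun hxm ↦ ?_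
    obtain ⟨s, hs, hsspan, hms⟩ := hm.exists_ssuperset hB₀ hB₁ hmspan hx hxm
    exact hms.not_subset (hmax ⟨hs, hsspan⟩ hms.subset)
  refine ⟨m, hm, hfst, hm.snd_subset.antisymm fun y hy ↦ by_contra fun hym ↦ hym ?_⟩
  have hswap : B₁ \ Prod.snd '' m ∪ Prod.fst '' m = B₀ :=
    (hB₀.eq_of_subset_isBase hm.isBase_swap (hfst ▸ subset_union_right)).symm
  have hyB₀ : y ∈ B₀ := hswap ▸ Or.inl ⟨hy, hym⟩
  exact ⟨(y, y), hm.diag_mem y ⟨hyB₀, hy⟩, rfl⟩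

end Matroid

theorem stmt_3 {α : Type*} (M : Matroid α) [M.Finitary]
    {B₀ B₁ : Set α} (hB₀ : M.IsBase B₀) (hB₁ : M.IsBase B₁) :
    ∃ f : B₀ → B₁, Function.Bijective f ∧
      ∀ x : B₀, M.IsBase (insert (f x : α) (B₀ \ {(x : α)})) := by
  obtain ⟨m, hm, hfst, hsnd⟩ := M.exists_isExchangeMatching_image_eq hB₀ hB₁
  obtain ⟨f, hf, hfm⟩ := exists_bijective_of_injOn_fst_snd hm.injOn_fst hm.injOn_snd hfst hsnd
  exact ⟨f, hf, fun x ↦ hm.isBase_exchange _ (hfm x)⟩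
end

section
/- For any matroid M, the following are equivalent: (i) for every pair of bases B₀, B₁ of M there is a bijection f : B₀ → B₁ such that (B₀ \ {x}) ∪ {f(x)} is a base for each x ∈ B₀; (ii) for every pair of bases B₀, B₁ of M there is a bijection f : B₀ → B₁ such that (B₁ \ {f(x)}) ∪ {x} is a base for each x ∈ B₀. -/
/- Both conditions say the same thing with the roles of `B₀` and `B₁` exchanged: applying one of
them to the pair `(B₁, B₀)` and inverting the resulting bijection gives the other. -/

theorem Function.exists_bijective_symm {β γ : Type*} {P : β → γ → Prop}
    (h : ∃ f : β → γ, Function.Bijective f ∧ ∀ x, P x (f x)) :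
    ∃ g : γ → β, Function.Bijective g ∧ ∀ y, P (g y) y := by
  obtain ⟨f, hf, hP⟩ := h
  let e := Equiv.ofBijective f hf
  refine ⟨e.symm, e.symm.bijective, fun y => ?_⟩
  simpa only [e, Equiv.ofBijective_apply_symm_apply] using hP (e.symm y)

theorem stmt_5 {α : Type*} (M : Matroid α) :
    (∀ B₀ B₁ : Set α, M.IsBase B₀ → M.IsBase B₁ →
      ∃ f : B₀ → B₁, Function.Bijective f ∧
        ∀ x : B₀, M.IsBase (insert (f x : α) (B₀ \ {(x : α)}))) ↔
    (∀ B₀ B₁ : Set α, M.IsBase B₀ → M.IsBase B₁ →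
      ∃ f : B₀ → B₁, Function.Bijective f ∧
        ∀ x : B₀, M.IsBase (insert (x : α) (B₁ \ {(f x : α)}))) := by
  constructor
  · intro h B₀ B₁ hB₀ hB₁
    exact Function.exists_bijective_symm
      (P := fun (y : B₁) (x : B₀) => M.IsBase (insert (x : α) (B₁ \ {(y : α)})))
      (h B₁ B₀ hB₁ hB₀)
  · intro h B₀ B₁ hB₀ hB₁
    exact Function.exists_bijective_symm
      (P := fun (y : B₁) (x : B₀) => M.IsBase (insert (y : α) (B₀ \ {(x : α)})))
      (h B₁ B₀ hB₁ hB₀)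
end

section
/- If M is a cofinitary matroid, J is an independent set of M, and B is a base of M, then there is an injection f : J → B such that (B \ {f(x)}) ∪ {x} is a base of M for each x ∈ J. -/
/-!
Dualize: `N = M✶` is finitary with base `D = E \ B`, and `D \ J ∪ B \ J = E \ J` spans `N`
because `J` is coindependent in `N`. It suffices to find distinct `ψ x ∈ B \ J` for
`x ∈ J \ B` with `ψ x ∉ cl_N (D - x)`: then `D - x + ψ x` is an `N`-base, whose complement is
`B - ψ x + x`.

For countably many `x` this is a greedy exchange. Keep a spanning pool `W`, initially
`D \ J ∪ B \ J`; at step `x`, a circuit through `x` inside `W + x` has an element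
`a ∉ cl_N (D - x)`, which must lie in `B \ J`; set `ψ x = a` and replace `a` by `x` in `W`.
The pool still spans, and `a` never re-enters it. In general, finitarity lets each element be
spanned by a finite set; ranking elements along a well-order by the first countable
closure under these witnesses containing them cuts `J \ B` into countable blocks, each spanned
by the rest of `D` and its own block of `B \ J`, and the greedy argument runs in each block.
-/

open Set

theorem exists_rank_with_countable_fibers {α : Type*} [LinearOrder α] [WellFoundedLT α]
    (r : α → Set α) (hr : ∀ u, (r u).Countable) :
    ∃ ρ : α → α, (∀ i, {u | ρ u = i}.Countable) ∧ ∀ u, ∀ v ∈ r u, ρ v ≤ ρ u := by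
  set R : α → Set α := fun y ↦ ⋃ n, (fun X ↦ ⋃ u ∈ X, r u)^[n] {y}
  have hR_self (y : α) : y ∈ R y := mem_iUnion.2 ⟨0, rfl⟩
  have hR_closed (y u : α) (hu : u ∈ R y) : r u ⊆ R y := fun v hv ↦ by
    obtain ⟨n, hn⟩ := mem_iUnion.1 hu
    exact mem_iUnion.2 ⟨n + 1, by rw [Function.iterate_succ_apply']; exact mem_biUnion hn hv⟩
  have hR_countable (y : α) : (R y).Countable := by
    refine countable_iUnion fun n ↦ ?_
    induction n with
    | zero => exact countable_singleton y
    | succ n ih => rw [Function.iterate_succ_apply']; exact ih.biUnion fun u _ ↦ hr u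
  let ρ (u : α) : α := wellFounded_lt.min {y | u ∈ R y} ⟨u, hR_self u⟩
  have hρ_mem (u : α) : u ∈ R (ρ u) := wellFounded_lt.min_mem {y | u ∈ R y} _
  refine ⟨ρ, fun i ↦ (hR_countable i).mono ?_, fun u v hv ↦ ?_⟩
  · rintro u rfl
    exact hρ_mem u
  · exact wellFounded_lt.min_le (s := {y | v ∈ R y}) (hR_closed _ u (hρ_mem u) hv)

namespace Matroid

variable {α : Type*} {M : Matroid α} {A D S T W : Set α} {t : α}

theorem Indep.exists_exchange_of_mem_closure (hD : M.Indep D) (htD : t ∈ D)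
    (htW : t ∈ M.closure W) (htW' : t ∉ W) :
    ∃ a ∈ W, a ∉ M.closure (D \ {t}) ∧ M.closure W ⊆ M.closure (insert t (W \ {a})) := by
  obtain ⟨C, hCW, hC, htC⟩ := exists_isCircuit_of_mem_closure htW htW'
  obtain ⟨a, ⟨haC, hat⟩, ha⟩ : ∃ a ∈ C \ {t}, a ∉ M.closure (D \ {t}) := by
    by_contra! h
    exact hD.notMem_closure_sdiff_of_mem htD
      (M.closure_subset_closure_of_subset_closure h (hC.mem_closure_sdiff_singleton_of_mem htC))
  have haW : a ∈ W := (hCW haC).resolve_left hat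
  have hCa : C \ {a} ⊆ insert t (W \ {a}) := fun c hc ↦
    (hCW hc.1).imp_right fun hcW ↦ ⟨hcW, hc.2⟩
  have ha_cl : a ∈ M.closure (insert t (W \ {a})) :=
    M.closure_subset_closure hCa (hC.mem_closure_sdiff_singleton_of_mem haC)
  refine ⟨a, haW, ha, ?_⟩
  calc M.closure W = M.closure (insert a (W \ {a})) := by
        rw [insert_sdiff_singleton, insert_eq_of_mem haW]
    _ ⊆ M.closure (insert a (insert t (W \ {a}))) :=
      M.closure_subset_closure (insert_subset_insert (subset_insert _ _))
    _ = M.closure (insert t (W \ {a})) := closure_insert_eq_of_mem_closure ha_cl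

theorem Indep.exists_exchange_seq (hD : M.Indep D) (hTD : T ⊆ D) (hTW : Disjoint T W)
    (hTcl : T ⊆ M.closure W) {e : α → ℕ} (he : InjOn e T) :
    ∃ (X : ℕ → Set α) (ψ : α → α), (∀ n ∉ e '' T, X (n + 1) = X n) ∧ ∀ t ∈ T,
      X (e t + 1) = insert t (X (e t) \ {ψ t}) ∧ ψ t ∈ X (e t) ∧ ψ t ∈ W ∧
        ψ t ∉ M.closure (D \ {t}) := by
  classical
  obtain rfl | ⟨t₀, -⟩ := T.eq_empty_or_nonempty
  · exact ⟨fun _ ↦ W, id, fun _ _ ↦ rfl, by simp⟩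
  have : Nonempty α := ⟨t₀⟩
  choose! pick hpickX hpickD hpickcl using fun t (ht : t ∈ D) X (h : t ∈ M.closure X)
    (h' : t ∉ X) ↦ hD.exists_exchange_of_mem_closure ht h h'
  set g := Function.invFunOn e T
  -- Stage `n` processes the element of `T` with index `n`, if there is one.
  obtain ⟨X, hX0, hXs⟩ : ∃ X : ℕ → Set α, X 0 = W ∧ ∀ n, X (n + 1) =
      if n ∈ e '' T then insert (g n) (X n \ {pick (g n) (X n)}) else X n :=
    ⟨fun n ↦ Nat.rec W (fun n Y ↦ if n ∈ e '' T then insert (g n) (Y \ {pick (g n) Y}) else Y) n,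
      rfl, fun _ ↦ rfl⟩
  have hXstep (t : α) (ht : t ∈ T) : X (e t + 1) = insert t (X (e t) \ {pick t (X (e t))}) := by
    have hg : g (e t) = t := he.leftInvOn_invFunOn ht
    rw [hXs, if_pos (mem_image_of_mem e ht), hg]
  have hXskip (n : ℕ) (hn : n ∉ e '' T) : X (n + 1) = X n := by rw [hXs, if_neg hn]
  have hinv (n : ℕ) : T ⊆ M.closure (X n) ∧ X n ⊆ W ∪ {s ∈ T | e s < n} := by
    induction n with
    | zero => simpa [hX0] using hTcl
    | succ n ih =>
      have hmono : W ∪ {s ∈ T | e s < n} ⊆ W ∪ {s ∈ T | e s < n + 1} :=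
        union_subset_union_right _ fun s hs ↦ ⟨hs.1, hs.2.trans (lt_add_one n)⟩
      by_cases hn : n ∈ e '' T
      · obtain ⟨t, ht, rfl⟩ := hn
        have htX : t ∉ X (e t) := fun h ↦
          (ih.2 h).elim (hTW.notMem_of_mem_left ht) fun h ↦ (lt_irrefl _ h.2)
        rw [hXstep t ht]
        exact ⟨ih.1.trans (hpickcl t (hTD ht) _ (ih.1 ht) htX),
          insert_subset (Or.inr ⟨ht, lt_add_one _⟩) (sdiff_subset.trans (ih.2.trans hmono))⟩
      · rw [hXskip n hn]
        exact ⟨ih.1, ih.2.trans hmono⟩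
  refine ⟨X, fun t ↦ pick t (X (e t)), hXskip, fun t ht ↦ ⟨hXstep t ht, ?_⟩⟩
  have htX : t ∉ X (e t) := fun h ↦
    ((hinv _).2 h).elim (hTW.notMem_of_mem_left ht) fun h ↦ (lt_irrefl _ h.2)
  have hX := hpickX t (hTD ht) _ ((hinv _).1 ht) htX
  have hD' := hpickD t (hTD ht) _ ((hinv _).1 ht) htX
  refine ⟨hX, ((hinv _).2 hX).resolve_right fun hs ↦ hD' ?_, hD'⟩
  exact M.mem_closure_of_mem' ⟨hTD hs.1, fun h ↦ (h ▸ hs.2).false⟩ (hD.subset_ground (hTD hs.1))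

theorem Indep.exists_injOn_of_countable (hD : M.Indep D) (hTD : T ⊆ D) (hT : T.Countable)
    (hTW : Disjoint T W) (hTcl : T ⊆ M.closure W) :
    ∃ ψ : α → α, InjOn ψ T ∧ ∀ t ∈ T, ψ t ∈ W ∧ ψ t ∉ M.closure (D \ {t}) := by
  obtain ⟨e, he⟩ := countable_iff_exists_injOn.1 hT
  obtain ⟨X, ψ, hXskip, hψ⟩ := hD.exists_exchange_seq hTD hTW hTcl he
  have hanti : Antitone fun n ↦ X n \ T := by
    refine antitone_nat_of_succ_le fun n ↦ ?_
    by_cases hn : n ∈ e '' T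
    · obtain ⟨t, ht, rfl⟩ := hn
      rw [(hψ t ht).1]
      rintro x ⟨hx | hx, hxT⟩
      exacts [(hxT (hx ▸ ht)).elim, ⟨hx.1, hxT⟩]
    · rw [hXskip n hn]
  have hgone (t : α) (ht : t ∈ T) : ψ t ∉ X (e t + 1) := by
    rw [(hψ t ht).1]
    rintro (h | h)
    exacts [hTW.notMem_of_mem_left ht (h ▸ (hψ t ht).2.2.1), h.2 rfl]
  have hlt (s : α) (hs : s ∈ T) (t : α) (ht : t ∈ T) (hst : e s < e t) : ψ s ≠ ψ t := fun h ↦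
    hgone s hs (hanti hst ⟨h ▸ (hψ t ht).2.1, hTW.notMem_of_mem_right (hψ s hs).2.2.1⟩).1
  refine ⟨ψ, fun s hs t ht h ↦ by_contra fun hne ↦ ?_, fun t ht ↦ (hψ t ht).2.2⟩
  rcases lt_or_gt_of_ne (he.ne hs ht hne) with hst | hts
  exacts [hlt s hs t ht hst h, hlt t ht s hs hts h.symm]

theorem IsBase.exists_countable_blocks [M.Finitary] (hD : M.IsBase D) (hSD : S ⊆ D)
    (hsp : M.Spanning ((D \ S) ∪ A)) :
    ∃ ρ : α → α, ∀ i, {x ∈ S | ρ x = i}.Countable ∧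
      {x ∈ S | ρ x = i} ⊆ M.closure ((D \ {x ∈ S | ρ x = i}) ∪ {a ∈ A | ρ a = i}) := by
  have hG (u : α) : ∃ F : Set α, F.Finite ∧ (u ∈ S → F ⊆ (D \ S) ∪ A ∧ u ∈ M.closure F) := by
    by_cases hu : u ∈ S
    · obtain ⟨F, hFsub, hFfin, -, huF⟩ := exists_mem_finite_closure_of_mem_closure
        (hsp.closure_eq.symm ▸ hD.subset_ground (hSD hu) : u ∈ M.closure ((D \ S) ∪ A))
      exact ⟨F, hFfin, fun _ ↦ ⟨hFsub, huF⟩⟩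
    · exact ⟨∅, finite_empty, fun h ↦ (hu h).elim⟩
  have hK (u : α) : ∃ F : Set α, F.Finite ∧ (u ∈ A → F ⊆ D ∧ u ∈ M.closure F) := by
    by_cases hu : u ∈ A
    · obtain ⟨F, hFsub, hFfin, -, huF⟩ := exists_mem_finite_closure_of_mem_closure
        (hD.closure_eq.symm ▸ hsp.subset_ground (Or.inr hu) : u ∈ M.closure D)
      exact ⟨F, hFfin, fun _ ↦ ⟨hFsub, huF⟩⟩
    · exact ⟨∅, finite_empty, fun h ↦ (hu h).elim⟩
  choose G hGfin hG using hG
  choose K hKfin hK using hK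
  obtain ⟨_, _⟩ := exists_wellFoundedLT α
  obtain ⟨ρ, hρ_fib, hρ_le⟩ := exists_rank_with_countable_fibers (fun u ↦ G u ∪ K u)
    fun u ↦ ((hGfin u).union (hKfin u)).countable
  refine ⟨ρ, fun i ↦ ⟨(hρ_fib i).mono fun x hx ↦ hx.2, fun x hx ↦ ?_⟩⟩
  set Ti := {x ∈ S | ρ x = i}
  have hD_Ti : D \ Ti ⊆ M.closure ((D \ Ti) ∪ {a ∈ A | ρ a = i}) :=
    M.subset_closure_of_subset' subset_union_left (sdiff_subset.trans hD.subset_ground)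
  refine M.closure_subset_closure_of_subset_closure (fun g hg ↦ ?_) (hG x hx.1).2
  obtain ⟨hgD, hgS⟩ | hgA := (hG x hx.1).1 hg
  · exact hD_Ti ⟨hgD, fun h ↦ hgS h.1⟩
  obtain hgi | hgi := eq_or_ne (ρ g) i
  · exact M.mem_closure_of_mem' (Or.inr ⟨hgA, hgi⟩) (hsp.subset_ground (Or.inr hgA))
  -- Now `ρ g < i`, so the finite set in `D` spanning `g` avoids the block `Ti`.
  have hgi : ρ g < i := (hx.2 ▸ hρ_le x g (Or.inl hg)).lt_of_ne hgi
  refine M.closure_subset_closure_of_subset_closure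
    (fun w hw ↦ hD_Ti ⟨(hK g hgA).1 hw, fun hwT ↦ ?_⟩) (hK g hgA).2
  exact ((hρ_le g w (Or.inr hw)).trans_lt hgi).ne hwT.2

theorem IsBase.exists_injOn_exchange [M.Finitary] (hD : M.IsBase D) (hSD : S ⊆ D)
    (hAD : Disjoint A D) (hsp : M.Spanning ((D \ S) ∪ A)) :
    ∃ ψ : α → α, InjOn ψ S ∧ ∀ x ∈ S, ψ x ∈ A ∧ M.IsBase (insert (ψ x) (D \ {x})) := by
  obtain ⟨ρ, hρ⟩ := hD.exists_countable_blocks hSD hsp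
  have hdisj (i : α) :
      Disjoint {x ∈ S | ρ x = i} ((D \ {x ∈ S | ρ x = i}) ∪ {a ∈ A | ρ a = i}) :=
    disjoint_union_right.2 ⟨disjoint_sdiff_right,
      (hAD.mono (fun a ha ↦ ha.1) fun x hx ↦ hSD hx.1).symm⟩
  choose ψ hψ_inj hψ using fun i ↦
    hD.indep.exists_injOn_of_countable (fun x hx ↦ hSD hx.1) (hρ i).1 (hdisj i) (hρ i).2
  have hψ_block (x : α) (hx : x ∈ S) : ψ (ρ x) x ∈ A ∧ ρ (ψ (ρ x) x) = ρ x := by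
    obtain ⟨hW, hcl⟩ := hψ (ρ x) x ⟨hx, rfl⟩
    refine hW.resolve_left fun h ↦ hcl (M.mem_closure_of_mem' ⟨h.1, fun hx' ↦ h.2 ?_⟩
      (hD.subset_ground h.1))
    rw [mem_singleton_iff.1 hx']
    exact ⟨hx, rfl⟩
  refine ⟨fun x ↦ ψ (ρ x) x, fun x hx y hy hxy ↦ ?_, fun x hx ↦ ⟨(hψ_block x hx).1, ?_⟩⟩
  · have hρxy : ρ x = ρ y := by
      rw [← (hψ_block x hx).2, ← (hψ_block y hy).2]
      exact congrArg ρ hxy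
    exact hψ_inj (ρ x) ⟨hx, rfl⟩ ⟨hy, hρxy.symm⟩ (by simpa only [hρxy] using hxy)
  · exact hD.exchange_base_of_notMem_closure (hSD hx) (hψ (ρ x) x ⟨hx, rfl⟩).2
      (hsp.subset_ground (Or.inr (hψ_block x hx).1))

theorem isBase_insert_sdiff_of_dual_isBase {B : Set α} {a x : α} (hBE : B ⊆ M.E)
    (hx : x ∈ M.E \ B) (ha : a ∈ B) (h : M✶.IsBase (insert a ((M.E \ B) \ {x}))) :
    M.IsBase (insert x (B \ {a})) := by
  convert h.compl_isBase_of_dual using 1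
  obtain ⟨hxE, hxB⟩ := hx
  have hxa : x ≠ a := fun h ↦ hxB (h ▸ ha)
  ext u
  have := @hBE u
  simp only [mem_insert_iff, mem_sdiff, mem_singleton_iff]
  by_cases hux : u = x
  · subst hux
    tauto
  · tauto

theorem IsBase.exists_injOn_insert_sdiff_isBase [M✶.Finitary] {B J : Set α} (hB : M.IsBase B)
    (hJ : M.Indep J) :
    ∃ φ : α → α, MapsTo φ J B ∧ InjOn φ J ∧ ∀ x ∈ J, M.IsBase (insert x (B \ {φ x})) := by
  classical
  have hBE := hB.subset_ground
  have hJE := hJ.subset_ground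
  have hsp : M✶.Spanning ((M.E \ B) \ (J \ B) ∪ B \ J) := by
    convert hJ.coindep.compl_spanning using 1
    ext u
    have := @hBE u
    simp only [mem_union, mem_sdiff, dual_ground]
    tauto
  obtain ⟨ψ, hψ_inj, hψ⟩ := hB.compl_isBase_dual.exists_injOn_exchange
    (fun x hx ↦ ⟨hJE hx.1, hx.2⟩) (disjoint_sdiff_right.mono_left sdiff_subset) hsp
  refine ⟨B.piecewise id ψ, fun x hx ↦ ?_, fun x hx y hy hxy ↦ ?_, fun x hx ↦ ?_⟩
  · by_cases hxB : x ∈ B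
    · simp [hxB]
    · simpa [hxB] using (hψ x ⟨hx, hxB⟩).1.1
  · by_cases hxB : x ∈ B <;> by_cases hyB : y ∈ B <;>
      simp only [piecewise_eq_of_mem, piecewise_eq_of_notMem, hxB, hyB, id, not_false_eq_true]
        at hxy
    · exact hxy
    · exact ((hψ y ⟨hy, hyB⟩).1.2 (hxy ▸ hx)).elim
    · exact ((hψ x ⟨hx, hxB⟩).1.2 (hxy ▸ hy)).elim
    · exact hψ_inj ⟨hx, hxB⟩ ⟨hy, hyB⟩ hxy
  · by_cases hxB : x ∈ B
    · simpa [hxB, insert_sdiff_singleton, insert_eq_of_mem hxB]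
    · simpa [hxB] using isBase_insert_sdiff_of_dual_isBase hBE ⟨hJE hx, hxB⟩
        (hψ x ⟨hx, hxB⟩).1.1 (hψ x ⟨hx, hxB⟩).2

end Matroid

theorem stmt_6 {α : Type*} (M : Matroid α) [M✶.Finitary]
    {J B : Set α} (hJ : M.Indep J) (hB : M.IsBase B) :
    ∃ f : J → B, Function.Injective f ∧
      ∀ x : J, M.IsBase (insert (x : α) (B \ {(f x : α)})) := by
  obtain ⟨φ, hmaps, hinj, hbase⟩ := hB.exists_injOn_insert_sdiff_isBase hJ
  exact ⟨hmaps.restrict φ J B, hmaps.restrict_inj.2 hinj, fun x ↦ hbase x x.2⟩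
end

section
/- Let F be a field, I and J disjoint index sets, and a : I × J → F row-finite (for each i ∈ I, only finitely many j with a(i,j) ≠ 0). For j ∈ J define f_j : I → F by f_j(i) = a(i,j), and for i ∈ I let f_i : I → F be the indicator function of {i}. Then {f_k : k ∈ I ∪ J} is a thin family, I is a base of the thin-sums matroid M it defines, and if the system ∑_j a(i,j)x(j) = 0 has only the trivial solution then J is independent in M. -/
/-- `I` is thin-independent for the family `f` of functions `X → F`. -/
def ThinIndep {E X F : Type*} [Field F] (f : E → X → F) (I : Set E) : Prop :=
  ∀ l : E → F, (∀ x : X, ∑ᶠ e ∈ I, l e * f e x = 0) → ∀ e ∈ I, l e = 0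

/-!
The family is the set of columns of the augmented matrix `[1 | a]`. The unit vectors are
independent, and adding any column `j` of `a` creates the dependence
`f_j - ∑ᵢ a(i,j) f_i = 0`, whose sum is finite in each coordinate; so the unit vectors form a
base. A thin dependence among the columns of `a` alone is precisely a nontrivial solution of
`∑ⱼ a(i,j) x(j) = 0`.
-/

open Set

section AugmentedColumns

variable {F : Type*} [Field F] {I J : Type*} [DecidableEq I]

def augmentedColumns (a : I → J → F) : I ⊕ J → I → F :=
  Sum.elim (fun i i' => if i' = i then 1 else 0) (fun j i => a i j)

variable (a : I → J → F)

@[simp]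
lemma augmentedColumns_inl (i i' : I) :
    augmentedColumns a (.inl i) i' = if i' = i then 1 else 0 := rfl

@[simp]
lemma augmentedColumns_inr (j : J) (i : I) : augmentedColumns a (.inr j) i = a i j := rfl

variable {a}

lemma finite_setOf_augmentedColumns_ne_zero (hrow : ∀ i : I, {j : J | a i j ≠ 0}.Finite)
    (i : I) : {k | augmentedColumns a k i ≠ 0}.Finite := by
  refine ((finite_singleton (Sum.inl i)).union ((hrow i).image Sum.inr)).subset ?_
  rintro (i' | j) hk
  · simp_all [eq_comm]
  · exact Or.inr ⟨j, hk, rfl⟩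

variable (a)

lemma finsum_mem_range_inl_augmentedColumns (l : I ⊕ J → F) (i : I) :
    ∑ᶠ e ∈ range Sum.inl, l e * augmentedColumns a e i = l (.inl i) := by
  rw [finsum_mem_range Sum.inl_injective, finsum_eq_single _ i fun i' h => by simp [Ne.symm h]]
  simp

lemma finsum_mem_range_inr_augmentedColumns (l : I ⊕ J → F) (i : I) :
    ∑ᶠ e ∈ range Sum.inr, l e * augmentedColumns a e i = ∑ᶠ j, a i j * l (.inr j) := by
  rw [finsum_mem_range Sum.inr_injective]
  simp only [augmentedColumns_inr, mul_comm]

lemma thinIndep_augmentedColumns_range_inl : ThinIndep (augmentedColumns a) (range Sum.inl) := by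
  rintro l hl _ ⟨i, rfl⟩
  rw [← finsum_mem_range_inl_augmentedColumns a l i]
  exact hl i

lemma not_thinIndep_augmentedColumns_insert_inr (j : J) :
    ¬ ThinIndep (augmentedColumns a) (insert (.inr j) (range Sum.inl)) := by
  intro h
  set l : I ⊕ J → F := Sum.elim (fun i => -a i j) fun _ => 1
  have hdep : ∀ i, ∑ᶠ e ∈ insert (.inr j) (range Sum.inl), l e * augmentedColumns a e i = 0 := by
    intro i
    have hfin : (range Sum.inl ∩ Function.support fun e => l e * augmentedColumns a e i).Finite :=
      (finite_singleton (Sum.inl i)).subset <| by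
        rintro _ ⟨⟨i', rfl⟩, hi'⟩
        simp_all [eq_comm]
    rw [finsum_mem_insert' _ (by simp) hfin, finsum_mem_range_inl_augmentedColumns]
    simp [l]
  simpa [l] using h l hdep (.inr j) (mem_insert _ _)

variable {a}

lemma thinIndep_augmentedColumns_range_inr
    (h : ∀ x : J → F, (∀ i : I, ∑ᶠ j : J, a i j * x j = 0) → x = 0) :
    ThinIndep (augmentedColumns a) (range Sum.inr) := by
  rintro l hl _ ⟨j, rfl⟩
  have hsol := h (l ∘ Sum.inr) fun i => by
    rw [← hl i, finsum_mem_range_inr_augmentedColumns]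
    rfl
  exact congrFun hsol j

end AugmentedColumns

theorem stmt_8_general {F : Type*} [Field F] {I J : Type*} [DecidableEq I] (a : I → J → F)
    (hrow : ∀ i : I, {j : J | a i j ≠ 0}.Finite)
    (f : I ⊕ J → I → F)
    (hf : f = Sum.elim (fun i i' => if i' = i then (1 : F) else 0) (fun j i => a i j))
    (M : Matroid (I ⊕ J))
    (hMI : ∀ S : Set (I ⊕ J), M.Indep S ↔ ThinIndep f S) :
    (∀ i : I, {k : I ⊕ J | f k i ≠ 0}.Finite) ∧
    M.IsBase (Set.range Sum.inl) ∧
    ((∀ x : J → F, (∀ i : I, ∑ᶠ j : J, a i j * x j = 0) → x = 0) →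
      M.Indep (Set.range Sum.inr)) := by
  obtain rfl : f = augmentedColumns a := hf
  refine ⟨finite_setOf_augmentedColumns_ne_zero hrow, ?_,
    fun h => (hMI _).2 (thinIndep_augmentedColumns_range_inr h)⟩
  refine ((hMI _).2 (thinIndep_augmentedColumns_range_inl a)).isBase_of_forall_insert ?_
  rintro (i | j) ⟨-, hnotin⟩ hindep
  · exact hnotin (mem_range_self i)
  · exact not_thinIndep_augmentedColumns_insert_inr a j ((hMI _).1 hindep)

theorem stmt_8 {F : Type*} [Field F] {I J : Type*} [DecidableEq I] (a : I → J → F)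
    (hrow : ∀ i : I, {j : J | a i j ≠ 0}.Finite)
    (f : I ⊕ J → I → F)
    (hf : f = Sum.elim (fun i i' => if i' = i then (1 : F) else 0) (fun j i => a i j))
    (M : Matroid (I ⊕ J)) (hME : M.E = Set.univ)
    (hMI : ∀ S : Set (I ⊕ J), M.Indep S ↔ ThinIndep f S) :
    (∀ i : I, {k : I ⊕ J | f k i ≠ 0}.Finite) ∧
    M.IsBase (Set.range Sum.inl) ∧
    ((∀ x : J → F, (∀ i : I, ∑ᶠ j : J, a i j * x j = 0) → x = 0) →
      M.Indep (Set.range Sum.inr)) :=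
  stmt_8_general a hrow f hf M hMI
end

section
/- Every dependent set in a matroid (on a possibly infinite ground set, satisfying the Higgs/Bruhn et al. axioms) contains a minimal dependent set (a circuit). -/
theorem stmt_15 {α : Type*} (M : Matroid α) {D : Set α}
    (hDE : D ⊆ M.E) (hD : ¬ M.Indep D) :
    ∃ C ⊆ D, ¬ M.Indep C ∧ ∀ C' ⊂ C, M.Indep C' := by
  obtain ⟨C, hCD, hC⟩ := ((M.not_indep_iff hDE).1 hD).exists_isCircuit_subset
  exact ⟨C, hCD, hC.not_indep, fun _ hC'C ↦ hC.ssubset_indep hC'C⟩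
end
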